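/- arXiv:1305.3682 — 3 statements merged into one kernel-verified Lean document; each statement's English description precedes it below -/
import Mathlib

section
/- The function f(R) = (π³ / (2√(R²−1))) · (R²(3 log 2 − 1) + 2 − 2/R²), defined for R > 1, attains its minimum value at R = √2, and the minimum value equals π³(6 log 2 − 1)/2. -/
/-!
With `c = 3 log 2 - 1`, `u = R²` and `y = u / √(u - 1)`, the energy is `π³/2 · (c y + 2 / y)`.
By AM-GM `y ≥ 2`, with equality exactly at `u = 2`, and `y ↦ c y + 2 / y` is increasing on
`[2, ∞)` as soon as `2 c ≥ 1`, which holds because `log 2 > 1/2`.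
-/

open Real

lemma half_le_three_mul_log_two_sub_one : 1 / 2 ≤ 3 * log 2 - 1 := by
  linarith [log_two_gt_d9]

lemma two_le_div_sqrt_sub_one {u : ℝ} (hu : 1 < u) : 2 ≤ u / √(u - 1) := by
  have hx : 0 < √(u - 1) := sqrt_pos.mpr (by linarith)
  have hsq : √(u - 1) ^ 2 = u - 1 := sq_sqrt (by linarith)
  rw [le_div_iff₀ hx]
  nlinarith [two_mul_le_add_sq (√(u - 1)) 1]

lemma mul_div_sqrt_sub_one_eq {u : ℝ} (c : ℝ) (hu : 1 < u) :
    (u * c + 2 - 2 / u) / √(u - 1) = c * (u / √(u - 1)) + 2 / (u / √(u - 1)) := by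
  have hx : 0 < √(u - 1) := sqrt_pos.mpr (by linarith)
  have hsq : √(u - 1) ^ 2 = u - 1 := sq_sqrt (by linarith)
  have hu0 : u ≠ 0 := by linarith
  field_simp
  rw [hsq]
  ring

lemma two_mul_add_one_le_mul_add_two_div {c y : ℝ} (hc : 1 / 2 ≤ c) (hy : 2 ≤ y) :
    2 * c + 1 ≤ c * y + 2 / y := by
  have hy0 : 0 < y := by linarith
  have hfactor : c * y + 2 / y - (2 * c + 1) = (y - 2) * (c * y - 1) / y := by
    field_simp
    ring
  have : 0 ≤ (y - 2) * (c * y - 1) / y := by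
    apply div_nonneg _ hy0.le
    exact mul_nonneg (by linarith) (by nlinarith)
  linarith

lemma two_mul_add_one_le_energy_ratio {c u : ℝ} (hc : 1 / 2 ≤ c) (hu : 1 < u) :
    2 * c + 1 ≤ (u * c + 2 - 2 / u) / √(u - 1) := by
  rw [mul_div_sqrt_sub_one_eq c hu]
  exact two_mul_add_one_le_mul_add_two_div hc (two_le_div_sqrt_sub_one hu)

theorem torus_energy_min :
    (∀ R : ℝ, 1 < R →
      (π^3 / (2 * Real.sqrt (R^2 - 1))) * (R^2 * (3 * Real.log 2 - 1) + 2 - 2 / R^2) ≥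
      (π^3 / (2 * Real.sqrt ((Real.sqrt 2)^2 - 1))) *
        ((Real.sqrt 2)^2 * (3 * Real.log 2 - 1) + 2 - 2 / (Real.sqrt 2)^2)) ∧
    (π^3 / (2 * Real.sqrt ((Real.sqrt 2)^2 - 1))) *
        ((Real.sqrt 2)^2 * (3 * Real.log 2 - 1) + 2 - 2 / (Real.sqrt 2)^2)
      = π^3 * (6 * Real.log 2 - 1) / 2 := by
  have hmin : (π^3 / (2 * √((√2)^2 - 1))) * ((√2)^2 * (3 * log 2 - 1) + 2 - 2 / (√2)^2)
      = π^3 * (6 * log 2 - 1) / 2 := by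
    rw [sq_sqrt zero_le_two]
    norm_num
    ring
  refine ⟨fun R hR => ?_, hmin⟩
  have hR2 : 1 < R ^ 2 := one_lt_pow₀ hR two_ne_zero
  rw [hmin, ge_iff_le]
  calc π^3 * (6 * log 2 - 1) / 2 = π^3 / 2 * (2 * (3 * log 2 - 1) + 1) := by ring
    _ ≤ π^3 / 2 * ((R^2 * (3 * log 2 - 1) + 2 - 2 / R^2) / √(R^2 - 1)) := by
      gcongr
      exact two_mul_add_one_le_energy_ratio half_le_three_mul_log_two_sub_one hR2
    _ = π^3 / (2 * √(R^2 - 1)) * (R^2 * (3 * log 2 - 1) + 2 - 2 / R^2) := by ring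
end

section
/- ∫₀^{π/2} ((π/2 − θ)·sin θ/cos³θ − sin²θ/cos²θ) dθ = π/4. -/
/-!
An antiderivative of the integrand is `x + (π/2 - x - sin x cos x) / (2 cos² x)`. Its value at `0`
is `π/4`, and since `sin x cos x ≤ π/2 - x ≤ cot x` on `(0, π/2)`, the second summand lies between
`0` and `cot x / 2`, so the antiderivative tends to `π/2` at `π/2`. The first of these inequalities
also makes the integrand nonnegative, which gives its integrability for free.
-/

open Real Filter Set Topology Function intervalIntegral

theorem intervalIntegral.integral_eq_sub_of_hasDerivAt_of_tendsto_of_nonneg {f f' : ℝ → ℝ}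
    {a b fa fb : ℝ} (hab : a < b) (hderiv : ∀ x ∈ Ioo a b, HasDerivAt f (f' x) x)
    (hpos : ∀ x ∈ Ioo a b, 0 ≤ f' x)
    (ha : Tendsto f (𝓝[>] a) (𝓝 fa)) (hb : Tendsto f (𝓝[<] b) (𝓝 fb)) :
    ∫ y in a..b, f' y = fb - fa := by
  -- `intervalIntegrable_deriv_of_nonneg` needs continuity on `[a, b]`: patch `f` at the endpoints.
  set F : ℝ → ℝ := update (update f a fa) b fb
  have hFf : EqOn F f (Ioo a b) := fun x hx => by
    simp only [F, update_of_ne hx.2.ne, update_of_ne hx.1.ne']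
  have hFderiv : ∀ x ∈ Ioo a b, HasDerivAt F (f' x) x := fun x hx =>
    (hderiv x hx).congr_of_eventuallyEq (hFf.eventuallyEq_of_mem (Ioo_mem_nhds hx.1 hx.2))
  have hFcont : ContinuousOn F (Icc a b) := by
    rw [continuousOn_update_iff, continuousOn_update_iff, Icc_sdiff_right, Ico_sdiff_left]
    refine ⟨⟨fun z hz => (hderiv z hz).continuousAt.continuousWithinAt, ?_⟩, ?_⟩
    · exact fun _ => ha.mono_left (nhdsWithin_mono _ Ioo_subset_Ioi_self)
    · rintro -
      refine (hb.congr' ?_).mono_left (nhdsWithin_mono _ Ico_subset_Iio_self)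
      filter_upwards [Ioo_mem_nhdsLT hab] with _ hz using (update_of_ne hz.1.ne' _ _).symm
  have hint : IntervalIntegrable f' MeasureTheory.volume a b := by
    refine intervalIntegrable_deriv_of_nonneg (g := F) ?_ ?_ ?_ <;>
      simp only [uIcc_of_le hab.le, min_eq_left hab.le, max_eq_right hab.le]
    exacts [hFcont, hFderiv, hpos]
  exact integral_eq_sub_of_hasDerivAt_of_tendsto hab hderiv hint ha hb

namespace Real

theorem mul_cos_le_sin {u : ℝ} (h0 : 0 ≤ u) (h1 : u < π / 2) : u * cos u ≤ sin u := by
  have hcos : 0 < cos u := cos_pos_of_mem_Ioo ⟨by linarith [pi_pos], h1⟩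
  have := le_tan h0 h1
  rwa [tan_eq_sin_div_cos, le_div_iff₀ hcos] at this

theorem sin_mul_cos_le_pi_div_two_sub {x : ℝ} (hx : x ≤ π / 2) : sin x * cos x ≤ π / 2 - x := by
  have := sin_le (x := π - 2 * x) (by linarith)
  rw [sin_pi_sub, sin_two_mul] at this
  linarith

end Real

namespace IntegralAux1

noncomputable def integrand (θ : ℝ) : ℝ :=
  (π/2 - θ) * sin θ / (cos θ)^3 - (sin θ)^2 / (cos θ)^2

noncomputable def remainder (x : ℝ) : ℝ := (π / 2 - x - sin x * cos x) / (2 * cos x ^ 2)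

noncomputable def antideriv (x : ℝ) : ℝ := x + remainder x

theorem integrand_eq {x : ℝ} (hx : cos x ≠ 0) :
    integrand x = sin x * (π / 2 - x - sin x * cos x) / cos x ^ 3 := by
  unfold integrand
  field_simp

theorem hasDerivAt_antideriv {x : ℝ} (hx : cos x ≠ 0) :
    HasDerivAt antideriv (integrand x) x := by
  have hnum : HasDerivAt (fun x => π / 2 - x - sin x * cos x) (-2 * cos x ^ 2) x := by
    refine (((hasDerivAt_id x).const_sub (π / 2)).sub
      ((hasDerivAt_sin x).mul (hasDerivAt_cos x))).congr_deriv ?_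
    linear_combination sin_sq_add_cos_sq x
  have hden : HasDerivAt (fun x => 2 * cos x ^ 2) (2 * (2 * cos x * -sin x)) x := by
    simpa using ((hasDerivAt_cos x).pow 2).const_mul 2
  refine ((hasDerivAt_id x).add (hnum.div hden (by positivity))).congr_deriv ?_
  rw [integrand_eq hx]
  field_simp
  ring

theorem integrand_nonneg {x : ℝ} (hx : x ∈ Ioo 0 (π / 2)) : 0 ≤ integrand x := by
  have hcos : 0 < cos x := cos_pos_of_mem_Ioo ⟨by linarith [pi_pos, hx.1], hx.2⟩
  have hsin : 0 < sin x := sin_pos_of_pos_of_lt_pi hx.1 (by linarith [hx.2, pi_pos])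
  rw [integrand_eq hcos.ne']
  have := sin_mul_cos_le_pi_div_two_sub hx.2.le
  have : 0 ≤ π / 2 - x - sin x * cos x := by linarith
  positivity

theorem remainder_nonneg {x : ℝ} (hx : x ∈ Ioo 0 (π / 2)) : 0 ≤ remainder x := by
  have := sin_mul_cos_le_pi_div_two_sub hx.2.le
  unfold remainder
  exact div_nonneg (by linarith) (by positivity)

theorem remainder_le {x : ℝ} (hx : x ∈ Ioo 0 (π / 2)) : remainder x ≤ cos x / (2 * sin x) := by
  have hcos : 0 < cos x := cos_pos_of_mem_Ioo ⟨by linarith [pi_pos, hx.1], hx.2⟩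
  have hsin : 0 < sin x := sin_pos_of_pos_of_lt_pi hx.1 (by linarith [hx.2, pi_pos])
  have key := mul_cos_le_sin (u := π / 2 - x) (by linarith [hx.2]) (by linarith [hx.1])
  rw [cos_pi_div_two_sub, sin_pi_div_two_sub] at key
  unfold remainder
  rw [div_le_div_iff₀ (by positivity) (by positivity)]
  nlinarith [sin_sq_add_cos_sq x]

theorem tendsto_remainder : Tendsto remainder (𝓝[<] (π / 2)) (𝓝 0) := by
  have hlim : Tendsto (fun x => cos x / (2 * sin x)) (𝓝[<] (π / 2)) (𝓝 0) := by
    have : ContinuousAt (fun x => cos x / (2 * sin x)) (π / 2) :=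
      continuous_cos.continuousAt.div (by fun_prop) (by simp)
    simpa using this.tendsto.mono_left nhdsWithin_le_nhds
  have hmem : ∀ᶠ x in 𝓝[<] (π / 2), x ∈ Ioo 0 (π / 2) := Ioo_mem_nhdsLT (by positivity)
  exact tendsto_of_tendsto_of_tendsto_of_le_of_le' tendsto_const_nhds hlim
    (hmem.mono fun x hx => remainder_nonneg hx) (hmem.mono fun x hx => remainder_le hx)

theorem antideriv_zero : antideriv 0 = π / 4 := by
  simp [antideriv, remainder]
  ring

end IntegralAux1

open IntegralAux1

theorem integral_aux1 :
    ∫ θ in (0:ℝ)..(π/2),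
        ((π/2 - θ) * Real.sin θ / (Real.cos θ)^3 - (Real.sin θ)^2 / (Real.cos θ)^2)
      = π / 4 := by
  have hpi : (0 : ℝ) < π / 2 := by positivity
  have hderiv : ∀ x ∈ Ioo 0 (π / 2), HasDerivAt antideriv (integrand x) x := fun x hx =>
    hasDerivAt_antideriv (cos_pos_of_mem_Ioo ⟨by linarith [hx.1], hx.2⟩).ne'
  have hleft : Tendsto antideriv (𝓝[>] 0) (𝓝 (π / 4)) := by
    rw [← antideriv_zero]
    exact (hasDerivAt_antideriv (by simp)).continuousAt.tendsto.mono_left nhdsWithin_le_nhds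
  have hright : Tendsto antideriv (𝓝[<] (π / 2)) (𝓝 (π / 2)) := by
    unfold antideriv
    simpa using (tendsto_id.mono_left nhdsWithin_le_nhds).add tendsto_remainder
  rw [show π / 4 = π / 2 - π / 4 by ring]
  exact integral_eq_sub_of_hasDerivAt_of_tendsto_of_nonneg hpi hderiv
    (fun x hx => integrand_nonneg hx) hleft hright
end

section
/- ∫₀^{π/2} ((π/2 − θ)·sin θ/cos²θ − sin²θ/cos θ) dθ = (4 − π)/2. -/
/-!
On `(0, π/2)` the integrand is the derivative of `(π/2 - θ) / cos θ + sin θ`, and it is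
nonnegative there because `sin θ cos θ = sin (2θ') / 2 ≤ θ'` for `θ' = π/2 - θ`. Writing
`(π/2 - θ) / cos θ` as `(sinc (π/2 - θ))⁻¹` extends this antiderivative continuously to
`[0, π/2]`, with values `π/2` and `2` at the endpoints, so the fundamental theorem of calculus for
nonnegative derivatives gives both integrability and the value `2 - π/2`.
-/

open Real Set

lemma sinc_pos_of_abs_lt_pi {x : ℝ} (hx : |x| < π) : 0 < sinc x := by
  have h_abs : sinc x = sinc |x| := by
    rcases abs_choice x with h | h <;> rw [h]
    exact (sinc_neg x).symm
  rw [h_abs]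
  rcases (abs_nonneg x).eq_or_lt with h0 | h0
  · rw [← h0, sinc_zero]
    exact one_pos
  · rw [sinc_of_ne_zero h0.ne']
    exact div_pos (sin_pos_of_pos_of_lt_pi h0 hx) h0

lemma sin_mul_cos_le_self {x : ℝ} (hx : 0 ≤ x) : sin x * cos x ≤ x := by
  have h := sin_le (by positivity : (0 : ℝ) ≤ 2 * x)
  rw [sin_two_mul] at h
  linarith

lemma inv_sinc_pi_div_two_sub {θ : ℝ} (hθ : θ ≠ π / 2) :
    (sinc (π / 2 - θ))⁻¹ = (π / 2 - θ) / cos θ := by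
  rw [sinc_of_ne_zero (sub_ne_zero.2 hθ.symm), sin_pi_div_two_sub, inv_div]

lemma hasDerivAt_sub_div_cos_add_sin (c : ℝ) {x : ℝ} (hx : cos x ≠ 0) :
    HasDerivAt (fun θ => (c - θ) / cos θ + sin θ)
      ((c - x) * sin x / cos x ^ 2 - sin x ^ 2 / cos x) x := by
  refine ((((hasDerivAt_id x).const_sub c).div (hasDerivAt_cos x) hx).add
    (hasDerivAt_sin x)).congr_deriv ?_
  rw [sin_sq, id]
  field_simp
  ring

lemma pi_div_two_sub_mul_sin_div_cos_sq_sub_nonneg {θ : ℝ} (hθ : θ ∈ Ioo 0 (π / 2)) :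
    0 ≤ (π / 2 - θ) * sin θ / cos θ ^ 2 - sin θ ^ 2 / cos θ := by
  have hcos : 0 < cos θ := cos_pos_of_mem_Ioo ⟨by linarith [hθ.1, pi_pos], hθ.2⟩
  have hsin : 0 ≤ sin θ := sin_nonneg_of_nonneg_of_le_pi hθ.1.le (by linarith [hθ.2, pi_pos])
  have hkey : sin θ * cos θ ≤ π / 2 - θ := by
    simpa only [sin_pi_div_two_sub, cos_pi_div_two_sub, mul_comm]
      using sin_mul_cos_le_self (sub_nonneg.2 hθ.2.le)
  have hform : (π / 2 - θ) * sin θ / cos θ ^ 2 - sin θ ^ 2 / cos θ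
      = sin θ * (π / 2 - θ - sin θ * cos θ) / cos θ ^ 2 := by
    field_simp
  rw [hform]
  exact div_nonneg (mul_nonneg hsin (sub_nonneg.2 hkey)) (sq_nonneg _)

theorem integral_aux2 :
    ∫ θ in (0:ℝ)..(π/2),
        ((π/2 - θ) * Real.sin θ / (Real.cos θ)^2 - (Real.sin θ)^2 / Real.cos θ)
      = (4 - π) / 2 := by
  set F : ℝ → ℝ := fun θ => (sinc (π / 2 - θ))⁻¹ + sin θ
  have hderiv : ∀ x ∈ Ioo 0 (π / 2),
      HasDerivAt F ((π / 2 - x) * sin x / cos x ^ 2 - sin x ^ 2 / cos x) x := by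
    intro x hx
    have hcos : cos x ≠ 0 := (cos_pos_of_mem_Ioo ⟨by linarith [hx.1, pi_pos], hx.2⟩).ne'
    refine (hasDerivAt_sub_div_cos_add_sin (π / 2) hcos).congr_of_eventuallyEq ?_
    filter_upwards [eventually_ne_nhds hx.2.ne] with θ hθ
    simp only [F, inv_sinc_pi_div_two_sub hθ]
  have hcont : ContinuousOn F (Icc 0 (π / 2)) := by
    refine ContinuousOn.add (ContinuousOn.inv₀ (by fun_prop) fun θ hθ => ?_) (by fun_prop)
    refine (sinc_pos_of_abs_lt_pi ?_).ne'
    rw [abs_of_nonneg (sub_nonneg.2 hθ.2)]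
    linarith [hθ.1, pi_pos]
  have hint : IntervalIntegrable _ MeasureTheory.volume 0 (π / 2) :=
    (intervalIntegrable_iff_integrableOn_Ioc_of_le pi_div_two_pos.le).2 <|
      intervalIntegral.integrableOn_deriv_of_nonneg hcont hderiv
        fun _ => pi_div_two_sub_mul_sin_div_cos_sq_sub_nonneg
  rw [intervalIntegral.integral_eq_sub_of_hasDerivAt_of_le pi_div_two_pos.le hcont hderiv hint]
  simp only [F, sub_self, sinc_zero, sub_zero, sinc_of_ne_zero pi_div_two_pos.ne', sin_pi_div_two,
    sin_zero, one_div, inv_inv]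
  ring
end
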